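/- arXiv:1507.05044 — 5 statements merged into one kernel-verified Lean document; each statement's English description precedes it below -/
import Mathlib

section
/- If X is a compact metric space and f : X → X satisfies d(f(x), f(y)) ≥ d(x, y) for all x, y ∈ X, then f is an isometry, i.e., d(f(x), f(y)) = d(x, y) for all x, y ∈ X. -/
/-!
An expansive map of a compact space is recurrent: the orbit of any point has two terms `f^[m] x`,
`f^[m+k+1] x` that are `ε`-close, and undoing the first `m` steps (which can only shrink distances)
shows that `f^[k+1] x` is `ε`-close to `x`. Applying this to `f × f` on `X × X` makes `x` and `y`
return close to themselves simultaneously, so `d(f x, f y) ≤ d(f^[k+1] x, f^[k+1] y) ≤ d(x, y) + 2ε`.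
-/

section Expansive

variable {X : Type*} [PseudoMetricSpace X] {f : X → X}

theorem dist_le_dist_iterate_of_expansive (hf : ∀ x y : X, dist x y ≤ dist (f x) (f y))
    (n : ℕ) (x y : X) : dist x y ≤ dist (f^[n] x) (f^[n] y) := by
  induction n with
  | zero => rfl
  | succ n ih =>
    simp only [Function.iterate_succ_apply']
    exact ih.trans (hf _ _)

theorem Prod.map_expansive (hf : ∀ x y : X, dist x y ≤ dist (f x) (f y)) (p q : X × X) :
    dist p q ≤ dist (Prod.map f f p) (Prod.map f f q) := by
  simp only [Prod.dist_eq, Prod.map_fst, Prod.map_snd]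
  exact max_le_max (hf _ _) (hf _ _)

theorem exists_lt_dist_lt_of_compactSpace [CompactSpace X] (u : ℕ → X) {ε : ℝ} (hε : 0 < ε) :
    ∃ m n, m < n ∧ dist (u n) (u m) < ε := by
  obtain ⟨p, -, φ, hφ, hlim⟩ := isCompact_univ.tendsto_subseq fun n => Set.mem_univ (u n)
  obtain ⟨N, hN⟩ := Metric.cauchySeq_iff.mp hlim.cauchySeq ε hε
  exact ⟨φ N, φ (N + 1), hφ N.lt_succ_self, hN _ N.le_succ _ le_rfl⟩

theorem exists_dist_iterate_succ_lt_of_expansive [CompactSpace X]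
    (hf : ∀ x y : X, dist x y ≤ dist (f x) (f y)) (x : X) {ε : ℝ} (hε : 0 < ε) :
    ∃ k, dist (f^[k + 1] x) x < ε := by
  obtain ⟨m, n, hmn, hclose⟩ := exists_lt_dist_lt_of_compactSpace (fun n => f^[n] x) hε
  obtain ⟨k, rfl⟩ := Nat.exists_eq_add_of_lt hmn
  refine ⟨k, lt_of_le_of_lt ?_ hclose⟩
  rw [add_assoc, Function.iterate_add_apply f m (k + 1)]
  exact dist_le_dist_iterate_of_expansive hf m _ _

end Expansive

theorem expansive_isometry_compact {X : Type*} [MetricSpace X] [CompactSpace X]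
    (f : X → X) (hf : ∀ x y : X, dist x y ≤ dist (f x) (f y)) :
    ∀ x y : X, dist (f x) (f y) = dist x y := by
  intro x y
  refine le_antisymm (le_of_forall_pos_lt_add fun ε hε => ?_) (hf x y)
  obtain ⟨k, hreturn⟩ :=
    exists_dist_iterate_succ_lt_of_expansive (Prod.map_expansive hf) (x, y) (half_pos hε)
  obtain ⟨hx, hy⟩ : dist (f^[k + 1] x) x < ε / 2 ∧ dist (f^[k + 1] y) y < ε / 2 := by
    simpa only [Prod.map_iterate, Prod.dist_eq, Prod.map_fst, Prod.map_snd, max_lt_iff] using hreturn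
  calc dist (f x) (f y) ≤ dist (f^[k + 1] x) (f^[k + 1] y) :=
        dist_le_dist_iterate_of_expansive hf k (f x) (f y)
    _ ≤ dist (f^[k + 1] x) x + dist x y + dist y (f^[k + 1] y) := dist_triangle4 _ _ _ _
    _ < ε / 2 + dist x y + ε / 2 := by
        rw [dist_comm y]
        gcongr
    _ = dist x y + ε := by ring
end

section
/- If X is a totally bounded metric space and f : X → X satisfies d(f(x), f(y)) ≥ d(x, y) for all x, y ∈ X, then f is an isometry. -/
/-!
An expansive self-map of a totally bounded space is recurrent: by pigeonhole two points
`f^[m] x` and `f^[m + n + 1] x` of an orbit are `δ`-close, and since `f^[m]` does not shrink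
distances, `x` and `f^[n + 1] x` are `δ`-close too. Applying this to `Prod.map f f` at `(x, y)`
gives one `n` with `f^[n + 1] x ≈ x` and `f^[n + 1] y ≈ y`, so
`dist (f x) (f y) ≤ dist (f^[n + 1] x) (f^[n + 1] y) ≈ dist x y`.
-/

open Filter Function Set

theorem TotallyBounded.prod {α β : Type*} [UniformSpace α] [UniformSpace β] {s : Set α}
    {t : Set β} (hs : TotallyBounded s) (ht : TotallyBounded t) : TotallyBounded (s ×ˢ t) := by
  refine totallyBounded_iff_ultrafilter.2 fun g hg => ?_
  have hst : s ×ˢ t ∈ (g : Filter (α × β)) := le_principal_iff.1 hg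
  have hfst := totallyBounded_iff_ultrafilter.1 hs (g.map Prod.fst)
    (tendsto_principal.2 (mem_of_superset hst fun _ hp => hp.1))
  have hsnd := totallyBounded_iff_ultrafilter.1 ht (g.map Prod.snd)
    (tendsto_principal.2 (mem_of_superset hst fun _ hp => hp.2))
  exact (hfst.prod hsnd).mono le_prod_map_fst_snd

theorem TotallyBounded.exists_lt_dist_lt {α : Type*} [PseudoMetricSpace α] {s : Set α}
    (hs : TotallyBounded s) {u : ℕ → α} (hu : ∀ n, u n ∈ s) {δ : ℝ} (hδ : 0 < δ) :
    ∃ m n, m < n ∧ dist (u m) (u n) < δ := by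
  obtain ⟨t, ht, hcover⟩ := Metric.totallyBounded_iff.1 hs (δ / 2) (half_pos hδ)
  have hnear : ∀ n, ∃ c ∈ t, dist (u n) c < δ / 2 := fun n => by
    simpa using hcover (hu n)
  choose c hct hc using hnear
  obtain ⟨m, n, hmn, hcmn⟩ := ht.exists_lt_map_eq_of_forall_mem hct
  refine ⟨m, n, hmn, ?_⟩
  calc dist (u m) (u n) ≤ dist (u m) (c m) + dist (u n) (c m) := dist_triangle_right _ _ _
    _ < δ / 2 + δ / 2 := add_lt_add (hc m) (hcmn ▸ hc n)
    _ = δ := add_halves δ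

namespace AntilipschitzWith

variable {α β : Type*}

protected theorem iterate [PseudoEMetricSpace α] {K : NNReal} {f : α → α}
    (hf : AntilipschitzWith K f) : ∀ n, AntilipschitzWith (K ^ n) f^[n]
  | 0 => by simpa only [pow_zero, iterate_zero] using AntilipschitzWith.id
  | n + 1 => by rw [pow_succ']; exact (hf.iterate n).comp hf

theorem prodMap [PseudoEMetricSpace α] [PseudoEMetricSpace β] {K : NNReal} {f : α → α}
    {g : β → β} (hf : AntilipschitzWith K f) (hg : AntilipschitzWith K g) :
    AntilipschitzWith K (Prod.map f g) := fun p q => by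
  simp only [Prod.edist_eq, Prod.map_fst, Prod.map_snd]
  exact max_le ((hf _ _).trans (by gcongr; exact le_max_left _ _))
    ((hg _ _).trans (by gcongr; exact le_max_right _ _))

variable [PseudoMetricSpace α] {f : α → α}

theorem dist_le_dist_iterate (hf : AntilipschitzWith 1 f) (n : ℕ) (x y : α) :
    dist x y ≤ dist (f^[n] x) (f^[n] y) := by
  simpa using (hf.iterate n).le_mul_dist x y

theorem exists_dist_iterate_succ_lt (hf : AntilipschitzWith 1 f)
    (hα : TotallyBounded (univ : Set α)) (x : α) {δ : ℝ} (hδ : 0 < δ) :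
    ∃ n, dist x (f^[n + 1] x) < δ := by
  obtain ⟨m, k, hmk, hclose⟩ :=
    hα.exists_lt_dist_lt (u := fun n => f^[n] x) (fun _ => mem_univ _) hδ
  obtain ⟨n, rfl⟩ := Nat.exists_eq_add_of_lt hmk
  refine ⟨n, (hf.dist_le_dist_iterate m _ _).trans_lt ?_⟩
  rwa [← iterate_add_apply, ← add_assoc]

theorem dist_apply_le_dist_add (hf : AntilipschitzWith 1 f) (n : ℕ) (x y : α) :
    dist (f x) (f y) ≤ dist x y + dist x (f^[n + 1] x) + dist y (f^[n + 1] y) :=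
  calc dist (f x) (f y) ≤ dist (f^[n + 1] x) (f^[n + 1] y) := hf.dist_le_dist_iterate n _ _
    _ ≤ dist (f^[n + 1] x) x + dist x y + dist y (f^[n + 1] y) := dist_triangle4 _ _ _ _
    _ = dist x y + dist x (f^[n + 1] x) + dist y (f^[n + 1] y) := by rw [dist_comm _ x]; ring

end AntilipschitzWith

theorem expansive_isometry_totallyBounded {X : Type*} [MetricSpace X]
    (hX : TotallyBounded (Set.univ : Set X))
    (f : X → X) (hf : ∀ x y : X, dist x y ≤ dist (f x) (f y)) :
    ∀ x y : X, dist (f x) (f y) = dist x y := by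
  have hf₁ : AntilipschitzWith 1 f := .of_le_mul_dist fun x y => by simpa using hf x y
  have hX₂ : TotallyBounded (univ : Set (X × X)) := univ_prod_univ (α := X) ▸ hX.prod hX
  intro x y
  refine le_antisymm (le_of_forall_pos_le_add fun ε hε => ?_) (hf x y)
  obtain ⟨n, hn⟩ := (hf₁.prodMap hf₁).exists_dist_iterate_succ_lt hX₂ (x, y) (half_pos hε)
  simp only [Prod.map_iterate, Prod.dist_eq, Prod.map_apply, max_lt_iff] at hn
  linarith [hf₁.dist_apply_le_dist_add n x y, hn.1, hn.2]
end

section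
/- Let X be a totally bounded metric space, Y a dense subset of X, and f : Y → X a map satisfying d(f(x), f(y)) ≥ d(x, y) for all x, y ∈ Y. Then f is an isometry: d(f(x), f(y)) = d(x, y) for all x, y ∈ Y. -/
/-!
Using density, approximate the orbits of `x` and `y` under `f` by sequences `xₙ`, `yₙ` in `Y`
with total error at most `δ`. Total boundedness gives `n < m` such that `(xₙ, yₙ)` and
`(xₘ, yₘ)` are `δ`-close. Distances between points of the approximate orbits grow up to `O(δ)`,
because `f` does not decrease distances; so with `k = m - n` we get
`d(f x, f y) ≤ d(x_k, y_k) + O(δ)` and `d(x, x_k) ≤ d(xₙ, xₘ) + O(δ)`, likewise for `y`.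
Hence `d(f x, f y) ≤ d(x, y) + O(δ)`.
-/

open Metric

section

variable {X : Type*} [PseudoMetricSpace X]

theorem TotallyBounded.exists_lt_dist_lt_and_dist_lt {s : Set X} (hs : TotallyBounded s)
    {a b : ℕ → X} (ha : ∀ n, a n ∈ s) (hb : ∀ n, b n ∈ s) {ε : ℝ} (hε : 0 < ε) :
    ∃ n m, n < m ∧ dist (a n) (a m) < ε ∧ dist (b n) (b m) < ε := by
  obtain ⟨t, htf, hst⟩ := totallyBounded_iff.1 hs (ε / 2) (half_pos hε)
  have hcenter : ∀ x ∈ s, ∃ c ∈ t, dist x c < ε / 2 := fun x hx => by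
    simpa using hst hx
  choose! c hct hc using hcenter
  obtain ⟨n, m, hnm, hcnm⟩ := Set.Finite.exists_lt_map_eq_of_forall_mem
    (f := fun n => (c (a n), c (b n))) (fun n => Set.mk_mem_prod (hct _ (ha n)) (hct _ (hb n)))
    (htf.prod htf)
  have close : ∀ {x y}, x ∈ s → y ∈ s → c x = c y → dist x y < ε := fun hx hy hxy =>
    calc dist _ _ ≤ dist _ (c _) + dist _ (c _) := hxy ▸ dist_triangle_right _ _ _
      _ < ε / 2 + ε / 2 := add_lt_add (hc _ hx) (hc _ hy)
      _ = ε := add_halves ε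
  exact ⟨n, m, hnm, close (ha n) (ha m) (congrArg Prod.fst hcnm),
    close (hb n) (hb m) (congrArg Prod.snd hcnm)⟩

variable {Y : Set X} {f : Y → X} {s : ℕ → ℝ} {u v : ℕ → Y}

/-- The error of step `n` is paid from the budget `s`, so the errors along any stretch of the
sequence telescope. -/
def IsPseudoOrbit (f : Y → X) (s : ℕ → ℝ) (u : ℕ → Y) : Prop :=
  ∀ n, dist (u (n + 1) : X) (f (u n)) ≤ s n - s (n + 1)

theorem exists_isPseudoOrbit (hY : Dense Y) (hs : StrictAnti s) (y : Y) :
    ∃ u, u 0 = y ∧ IsPseudoOrbit f s u := by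
  have hstep : ∀ (n : ℕ) (p : Y), ∃ q : Y, dist (q : X) (f p) < s n - s (n + 1) := fun n p => by
    obtain ⟨q, hqY, hq⟩ := hY.exists_dist_lt (f p) (sub_pos.2 (hs n.lt_succ_self))
    exact ⟨⟨q, hqY⟩, by rwa [dist_comm]⟩
  choose g hg using hstep
  exact ⟨fun n => Nat.rec y g n, rfl, fun n => (hg n _).le⟩

theorem IsPseudoOrbit.dist_map_le (hu : IsPseudoOrbit f s u) (hv : IsPseudoOrbit f s v)
    (i j : ℕ) :
    dist (f (u i)) (f (v j)) ≤
      dist (u (i + 1) : X) (v (j + 1)) + (s i - s (i + 1)) + (s j - s (j + 1)) := by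
  have := dist_triangle4 (f (u i)) (u (i + 1)) (v (j + 1)) (f (v j))
  linarith [hu i, hv j, dist_comm (f (u i)) (u (i + 1) : X)]

theorem IsPseudoOrbit.dist_le_dist_add (hf : ∀ x y : Y, dist (x : X) y ≤ dist (f x) (f y))
    (hu : IsPseudoOrbit f s u) (hv : IsPseudoOrbit f s v) (i j k : ℕ) :
    dist (u i : X) (v j) ≤
      dist (u (i + k) : X) (v (j + k)) + (s i - s (i + k)) + (s j - s (j + k)) := by
  induction k with
  | zero => simp
  | succ k ih =>
    have := hu.dist_map_le hv (i + k) (j + k)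
    rw [← add_assoc, ← add_assoc]
    linarith [hf (u (i + k)) (v (j + k))]

end

theorem expansive_isometry_dense {X : Type*} [MetricSpace X]
    (hX : TotallyBounded (Set.univ : Set X))
    (Y : Set X) (hY : Dense Y)
    (f : Y → X) (hf : ∀ x y : Y, dist (x : X) (y : X) ≤ dist (f x) (f y)) :
    ∀ x y : Y, dist (f x) (f y) = dist (x : X) (y : X) := by
  intro x y
  refine le_antisymm (le_of_forall_pos_le_add fun ε hε => ?_) (hf x y)
  obtain ⟨δ, hδ, rfl⟩ : ∃ δ, 0 < δ ∧ ε = 8 * δ := ⟨ε / 8, by positivity, by ring⟩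
  set s : ℕ → ℝ := fun n => δ / (n + 1)
  have hs : StrictAnti s := fun m n hmn => by
    dsimp only [s]
    gcongr
  have budget : ∀ i j, s i - s j ≤ δ := fun i j => by
    have : s i ≤ δ := div_le_self hδ.le (by simp)
    have : 0 < s j := by positivity
    linarith
  obtain ⟨a, rfl, ha⟩ := exists_isPseudoOrbit (f := f) hY hs x
  obtain ⟨b, rfl, hb⟩ := exists_isPseudoOrbit (f := f) hY hs y
  obtain ⟨n, m, hnm, han, hbn⟩ := hX.exists_lt_dist_lt_and_dist_lt (a := fun n => a n)
    (b := fun n => b n) (fun _ => trivial) (fun _ => trivial) hδ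
  obtain ⟨k, rfl⟩ := Nat.exists_eq_add_of_lt hnm
  have hreturn : ∀ u, IsPseudoOrbit f s u → dist (u n : X) (u (n + k + 1)) < δ →
      dist (u 0 : X) (u (k + 1)) ≤ 3 * δ := fun u hu hun => by
    have := hu.dist_le_dist_add hf hu 0 (k + 1) n
    rw [zero_add, show k + 1 + n = n + k + 1 by ring] at this
    linarith [budget 0 n, budget (k + 1) (n + k + 1)]
  have hfirst := ha.dist_map_le hb 0 0
  have hshift := ha.dist_le_dist_add hf hb 1 1 k
  rw [zero_add] at hfirst
  rw [add_comm 1 k] at hshift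
  linarith [budget 0 (k + 1), hreturn a ha han, hreturn b hb hbn,
    dist_triangle4 (a (k + 1) : X) (a 0) (b 0) (b (k + 1)), dist_comm (a (k + 1) : X) (a 0)]
end

section
/- Let X be a totally bounded metric space and Y ⊆ X a dense subset. For every ε > 0, the supremum of the gauge G over maximal ε-nets of Y equals the supremum of G over maximal ε-nets of X. -/
/-!
The gauge is continuous on `X^n` and the ε-separated `n`-tuples form an open set `S`, on which
the tuples with entries in the dense set `Y` are dense. Hence the gauge values over `S ∩ Yⁿ` are
dense in those over `S`, and a set of reals has the same supremum as any superset contained in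
its closure (also in the junk cases of empty or unbounded sets).
-/

open Set Topology

theorem csSup_eq_of_subset_of_subset_closure {α : Type*} [ConditionallyCompleteLinearOrder α]
    [TopologicalSpace α] [ClosedIicTopology α] {s t : Set α} (hst : s ⊆ t)
    (hts : t ⊆ closure s) : sSup s = sSup t := by
  rcases s.eq_empty_or_nonempty with rfl | hs
  · rw [closure_empty, subset_empty_iff] at hts
    rw [hts]
  by_cases hbdd : BddAbove s
  · exact ((isLUB_iff_of_subset_of_subset_closure hst hts).1 (isLUB_csSup hs hbdd)).csSup_eq
      (hs.mono hst) |>.symm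
  · rw [csSup_of_not_bddAbove hbdd, csSup_of_not_bddAbove fun h => hbdd (h.mono hst)]

theorem isOpen_setOf_pairwise_lt_dist {ι X : Type*} [Finite ι] [PseudoMetricSpace X] (ε : ℝ) :
    IsOpen {x : ι → X | Pairwise fun i j => ε < dist (x i) (x j)} := by
  simp only [Pairwise, ofPred_forall]
  exact isOpen_iInter_of_finite fun i => isOpen_iInter_of_finite fun j =>
    isOpen_iInter_of_finite fun _ => isOpen_lt continuous_const (by fun_prop)

noncomputable def tupleGauge {X : Type*} [PseudoMetricSpace X] {n : ℕ} (x : Fin n → X) : ℝ :=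
  ∏ p ∈ Finset.univ.filter (fun p : Fin n × Fin n => p.1 < p.2), dist (x p.1) (x p.2)

theorem continuous_tupleGauge {X : Type*} [PseudoMetricSpace X] (n : ℕ) :
    Continuous (tupleGauge : (Fin n → X) → ℝ) :=
  continuous_finsetProd _ fun _ _ => by fun_prop

theorem gauge_sup_dense_general {X : Type*} [MetricSpace X]
    (Y : Set X) (hY : Dense Y) (ε : ℝ) (n : ℕ) :
    sSup {r : ℝ | ∃ x : Fin n → X, (∀ i, x i ∈ Y) ∧
        (∀ i j : Fin n, i ≠ j → ε < dist (x i) (x j)) ∧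
        r = ∏ p ∈ Finset.univ.filter (fun p : Fin n × Fin n => p.1 < p.2),
              dist (x p.1) (x p.2)} =
    sSup {r : ℝ | ∃ x : Fin n → X,
        (∀ i j : Fin n, i ≠ j → ε < dist (x i) (x j)) ∧
        r = ∏ p ∈ Finset.univ.filter (fun p : Fin n × Fin n => p.1 < p.2),
              dist (x p.1) (x p.2)} := by
  set S := {x : Fin n → X | ∀ i j : Fin n, i ≠ j → ε < dist (x i) (x j)}
  have hYn : Dense (univ.pi fun _ : Fin n => Y) := dense_pi univ fun _ _ => hY
  have hsSup_image : sSup (tupleGauge '' (S ∩ univ.pi fun _ => Y)) = sSup (tupleGauge '' S) :=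
    csSup_eq_of_subset_of_subset_closure (image_mono inter_subset_left)
      ((image_mono (hYn.open_subset_closure_inter (isOpen_setOf_pairwise_lt_dist ε))).trans
        (image_closure_subset_closure_image (continuous_tupleGauge n)))
  convert hsSup_image using 2 <;> ext r <;>
    simp only [mem_ofPred_eq, mem_image, mem_inter_iff, mem_univ_pi, S, tupleGauge,
      eq_comm (a := r), and_comm, and_left_comm]

theorem gauge_sup_dense {X : Type*} [MetricSpace X]
    (hX : TotallyBounded (Set.univ : Set X))
    (Y : Set X) (hY : Dense Y) (ε : ℝ) (hε : 0 < ε) (n : ℕ)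
    (hmax : IsGreatest {m : ℕ | ∃ z : Fin m → X,
      ∀ i j : Fin m, i ≠ j → ε < dist (z i) (z j)} n) :
    sSup {r : ℝ | ∃ x : Fin n → X, (∀ i, x i ∈ Y) ∧
        (∀ i j : Fin n, i ≠ j → ε < dist (x i) (x j)) ∧
        r = ∏ p ∈ Finset.univ.filter (fun p : Fin n × Fin n => p.1 < p.2),
              dist (x p.1) (x p.2)} =
    sSup {r : ℝ | ∃ x : Fin n → X,
        (∀ i j : Fin n, i ≠ j → ε < dist (x i) (x j)) ∧
        r = ∏ p ∈ Finset.univ.filter (fun p : Fin n × Fin n => p.1 < p.2),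
              dist (x p.1) (x p.2)} :=
  gauge_sup_dense_general Y hY ε n
end

section
/- Let X be a compact metric space and f : X → X an expansive map (d(f(x), f(y)) ≥ d(x, y) for all x, y). Then f(X) is dense in X. -/
/-!
By compactness the orbit of `x` returns close to itself: some `f^[m] x` and `f^[n] x` with
`m < n` are `ε`-close. Since `f` does not shrink distances, pulling this back along `f^[m]`
gives `dist x (f^[n - m] x) < ε`, and `f^[n - m] x` lies in the range of `f`.
-/

open Function

theorem CompactSpace.exists_lt_dist_lt {X : Type*} [PseudoMetricSpace X] [CompactSpace X]
    (u : ℕ → X) {ε : ℝ} (hε : 0 < ε) : ∃ m n, m < n ∧ dist (u m) (u n) < ε := by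
  obtain ⟨_, -, φ, hφ, hlim⟩ := isCompact_univ.tendsto_subseq fun n => Set.mem_univ (u n)
  obtain ⟨N, hN⟩ := Metric.cauchySeq_iff.mp hlim.cauchySeq ε hε
  exact ⟨φ N, φ (N + 1), hφ N.lt_succ_self, hN N le_rfl (N + 1) N.le_succ⟩

section Expanding

variable {X : Type*} [PseudoMetricSpace X] {f : X → X}

theorem dist_le_dist_iterate (hf : ∀ x y, dist x y ≤ dist (f x) (f y)) (x y : X) :
    ∀ k, dist x y ≤ dist (f^[k] x) (f^[k] y)
  | 0 => le_rfl
  | k + 1 => by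
    rw [iterate_succ_apply', iterate_succ_apply']
    exact (dist_le_dist_iterate hf x y k).trans (hf _ _)

theorem exists_dist_iterate_lt [CompactSpace X] (hf : ∀ x y, dist x y ≤ dist (f x) (f y))
    (x : X) {ε : ℝ} (hε : 0 < ε) : ∃ k, 0 < k ∧ dist x (f^[k] x) < ε := by
  obtain ⟨m, n, hmn, hclose⟩ := CompactSpace.exists_lt_dist_lt (f^[·] x) hε
  refine ⟨n - m, Nat.sub_pos_of_lt hmn, (dist_le_dist_iterate hf _ _ m).trans_lt ?_⟩
  rwa [← iterate_add_apply, Nat.add_sub_cancel' hmn.le]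

end Expanding

theorem expansive_dense_range {X : Type*} [MetricSpace X] [CompactSpace X]
    (f : X → X) (hf : ∀ x y : X, dist x y ≤ dist (f x) (f y)) :
    Dense (Set.range f) := by
  refine Metric.dense_iff.mpr fun x r hr => ?_
  obtain ⟨k, hk, hclose⟩ := exists_dist_iterate_lt hf x hr
  obtain ⟨j, rfl⟩ := Nat.exists_eq_succ_of_ne_zero hk.ne'
  exact ⟨_, Metric.mem_ball'.mpr hclose, f^[j] x, (iterate_succ_apply' f j x).symm⟩
end
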